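/- For every ground HDLP Π there exists a unique maximal (with respect to set inclusion) subset R* ⊆ Π that is potentially applicable; that is, R* is potentially applicable, and every potentially applicable subset R ⊆ Π satisfies R ⊆ R*. -/

import Mathlib

/-!
Forward chaining from the empty set, ignoring negative bodies, reaches a rule exactly when
the rule occurs in some potentially applicable subset: along an enumeration every positive
body literal is the head literal of an earlier rule, and conversely the reached rules,
listed by the stage at which their positive body is first derived, form such an
enumeration. So the reached rules are the largest potentially applicable subset.
-/

open scoped Classical

namespace ASP

universe u v

/-- A ground literal: an atom together with a sign
(`true` for the atom itself, `false` for its strong negation `¬a`).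
The atom `|l|` of a literal `l` is its first component `l.1`. -/
abbrev Lit (α : Type u) : Type u := α × Bool

/-- A ground disjunctive rule, consisting of three finite sets of literals:
head, positive body and negative body. -/
structure Rule (α : Type u) : Type u where
  head : Finset (Lit α)
  pbody : Finset (Lit α)
  nbody : Finset (Lit α)
deriving DecidableEq

variable {α : Type u}

/-- A set of literals is consistent if it contains no atom together with
its strong negation. -/
def Consistent (S : Set (Lit α)) : Prop :=
  ∀ a : α, ¬((a, true) ∈ S ∧ (a, false) ∈ S)

/-- `S` satisfies a rule `r`: the head intersects `S` whenever
`pbody(r) ⊆ S` and `nbody(r) ∩ S = ∅`. -/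
def SatRule (S : Set (Lit α)) (r : Rule α) : Prop :=
  ((∀ l ∈ r.pbody, l ∈ S) ∧ (∀ l ∈ r.nbody, l ∉ S)) → ∃ l ∈ r.head, l ∈ S

/-- Answer sets of a positive program: `⊆`-minimal consistent sets of
literals satisfying all rules. -/
def IsAnswerSetPos (P : Set (Rule α)) (S : Set (Lit α)) : Prop :=
  Consistent S ∧ (∀ r ∈ P, SatRule S r) ∧
    ∀ T : Set (Lit α), Consistent T → (∀ r ∈ P, SatRule T r) → T ⊆ S → T = S

/-- The reduct `P^S` of a program w.r.t. a set of literals `S`. -/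
def reduct (P : Set (Rule α)) (S : Set (Lit α)) : Set (Rule α) :=
  {x | ∃ r ∈ P, (∀ l ∈ r.nbody, l ∉ S) ∧ x = ⟨r.head, r.pbody, ∅⟩}

/-- `S` is an answer set of `P` iff `S` is an answer set of the positive
program `P^S`. -/
def IsAnswerSet (P : Set (Rule α)) (S : Set (Lit α)) : Prop :=
  IsAnswerSetPos (reduct P S) S

/-- `Lit(P)`: the literals occurring in a program. -/
def litsOf (P : Set (Rule α)) : Set (Lit α) :=
  {l | ∃ r ∈ P, l ∈ r.head ∨ l ∈ r.pbody ∨ l ∈ r.nbody}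

/-- Edges of the positive dependency graph: from each head literal of a
rule to each of its positive body literals. -/
def DepEdge (P : Set (Rule α)) (l l' : Lit α) : Prop :=
  ∃ r ∈ P, l ∈ r.head ∧ l' ∈ r.pbody

/-- Head-cycle freeness: no two distinct literals occurring together in
some rule head lie on a common cycle of the positive dependency graph. -/
def HeadCycleFree (P : Set (Rule α)) : Prop :=
  ∀ r ∈ P, ∀ l ∈ r.head, ∀ l' ∈ r.head, l ≠ l' →
    ¬(Relation.ReflTransGen (DepEdge P) l l' ∧ Relation.ReflTransGen (DepEdge P) l' l)

/-- `P ∪ S`: the program `P` extended with the literals of `S` as facts. -/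
def withFacts (P : Set (Rule α)) (S : Set (Lit α)) : Set (Rule α) :=
  P ∪ {x | ∃ l ∈ S, x = ⟨{l}, ∅, ∅⟩}

/-- A set `R` of ground rules is potentially applicable if it admits an
enumeration `⟨r_i⟩_{i ∈ I}` (without repetitions), where `I` is a prefix of
`ℕ` or `I = ℕ`, such that `pbody(r_i) ⊆ ⋃_{j<i} head(r_j)` for all `i ∈ I`. -/
def PotentiallyApplicable (R : Set (Rule α)) : Prop :=
  ∃ (I : Set ℕ) (e : ℕ → Rule α),
    (∀ i ∈ I, ∀ j, j ≤ i → j ∈ I) ∧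
    (∀ i ∈ I, e i ∈ R) ∧
    (∀ r ∈ R, ∃ i ∈ I, e i = r) ∧
    (∀ i ∈ I, ∀ j ∈ I, e i = e j → i = j) ∧
    (∀ i ∈ I, ∀ l ∈ (e i).pbody, ∃ j ∈ I, j < i ∧ l ∈ (e j).head)


/-- The `n`-th iterate of forward chaining that ignores negative bodies and puts in every
head literal of a rule whose positive body is already derived. -/
def stage (P : Set (Rule α)) : ℕ → Set (Lit α)
  | 0 => ∅
  | n + 1 => {l | ∃ r ∈ P, ↑r.pbody ⊆ stage P n ∧ l ∈ r.head}

lemma stage_monotone (P : Set (Rule α)) : Monotone (stage P) := by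
  refine monotone_nat_of_le_succ fun n => ?_
  induction n with
  | zero => exact Set.empty_subset _
  | succ n ih =>
    rintro l ⟨r, hr, hbody, hl⟩
    exact ⟨r, hr, hbody.trans ih, hl⟩

lemma exists_subset_stage_of_subset_iUnion (P : Set (Rule α)) {s : Finset (Lit α)}
    (hs : ↑s ⊆ ⋃ n, stage P n) : ∃ n, ↑s ⊆ stage P n :=
  (stage_monotone P).directed_le.exists_mem_subset_of_finset_subset_biUnion hs

/-- The maximal potentially applicable subset `R*`. -/
def applicableRules (P : Set (Rule α)) : Set (Rule α) :=
  {r ∈ P | ∃ n, ↑r.pbody ⊆ stage P n}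

/-- Junk value `0` outside `applicableRules P`. -/
noncomputable def rank (P : Set (Rule α)) (r : Rule α) : ℕ :=
  sInf {n | ↑r.pbody ⊆ stage P n}

lemma pbody_subset_stage_rank {P : Set (Rule α)} {r : Rule α} (hr : r ∈ applicableRules P) :
    ↑r.pbody ⊆ stage P (rank P r) :=
  Nat.sInf_mem hr.2

lemma exists_head_of_mem_stage {P : Set (Rule α)} {l : Lit α} {n : ℕ} (hl : l ∈ stage P n) :
    ∃ r ∈ applicableRules P, l ∈ r.head ∧ rank P r < n := by
  cases n with
  | zero => exact hl.elim
  | succ n =>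
    obtain ⟨r, hr, hbody, hl⟩ := hl
    exact ⟨r, ⟨hr, n, hbody⟩, hl, Nat.lt_succ_of_le (Nat.sInf_le hbody)⟩

lemma subset_applicableRules {P R : Set (Rule α)} (hRP : R ⊆ P) (hR : PotentiallyApplicable R) :
    R ⊆ applicableRules P := by
  obtain ⟨I, e, -, he_mem, he_surj, -, he_body⟩ := hR
  have key : ∀ i ∈ I, e i ∈ applicableRules P := by
    intro i
    induction i using Nat.strong_induction_on with
    | _ i ih =>
      intro hi
      have hbody : ↑(e i).pbody ⊆ ⋃ n, stage P n := by
        intro l hl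
        obtain ⟨j, hj, hji, hlj⟩ := he_body i hi l hl
        have hj' := ih j hji hj
        exact Set.mem_iUnion.2 ⟨rank P (e j) + 1, e j, hj'.1, pbody_subset_stage_rank hj', hlj⟩
      exact ⟨hRP (he_mem i hi), exists_subset_stage_of_subset_iUnion P hbody⟩
  intro r hr
  obtain ⟨i, hi, rfl⟩ := he_surj r hr
  exact key i hi

lemma PotentiallyApplicable.of_rank {R : Set (Rule α)} (hR : R.Finite) (f : Rule α → ℕ)
    (hf : ∀ r ∈ R, ∀ l ∈ r.pbody, ∃ r' ∈ R, l ∈ r'.head ∧ f r' < f r) :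
    PotentiallyApplicable R := by
  -- the enumeration: the rules listed by increasing rank
  set L := hR.toFinset.toList.mergeSort (fun a b => f a ≤ f b)
  have hmem : ∀ r, r ∈ L ↔ r ∈ R := by simp [L]
  have hnodup : L.Nodup := (List.mergeSort_perm _ _).nodup_iff.2 (Finset.nodup_toList _)
  have hsorted : L.Pairwise (fun a b => f a ≤ f b) := by
    simpa using List.pairwise_mergeSort (le := fun a b => f a ≤ f b)
      (by simpa using fun _ _ _ => le_trans) (by simpa using fun a b => le_total (f a) (f b))
      hR.toFinset.toList
  set e : ℕ → Rule α := fun i => L.getD i ⟨∅, ∅, ∅⟩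
  have he : ∀ {i} (hi : i < L.length), e i = L[i] := List.getD_eq_getElem L _
  refine ⟨{i | i < L.length}, e, fun i hi j hj => hj.trans_lt hi,
    fun i hi => (hmem _).1 (he hi ▸ List.getElem_mem hi), fun r hr => ?_,
    fun i hi j hj hij => ?_, fun i hi l hl => ?_⟩
  · obtain ⟨i, hi, rfl⟩ := List.mem_iff_getElem.1 ((hmem r).2 hr)
    exact ⟨i, hi, he hi⟩
  · rw [he hi, he hj] at hij
    exact hnodup.getElem_inj_iff.1 hij
  · rw [he hi] at hl
    obtain ⟨r', hr', hlr', hlt⟩ := hf _ ((hmem _).1 (List.getElem_mem hi)) l hl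
    obtain ⟨j, hj, rfl⟩ := List.mem_iff_getElem.1 ((hmem r').2 hr')
    refine ⟨j, hj, ?_, he hj ▸ hlr'⟩
    by_contra! hij
    rcases hij.lt_or_eq with hij | rfl
    · exact hlt.not_ge (List.pairwise_iff_getElem.1 hsorted i j hi hj hij)
    · exact hlt.false

lemma potentiallyApplicable_applicableRules {P : Set (Rule α)} (hP : P.Finite) :
    PotentiallyApplicable (applicableRules P) :=
  .of_rank (hP.subset (Set.sep_subset _ _)) (rank P) fun _ hr _ hl =>
    exists_head_of_mem_stage (pbody_subset_stage_rank hr hl)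

theorem statement6_general {α : Type u} (P : Set (Rule α)) (hfin : P.Finite) :
    ∃! Rstar : Set (Rule α),
      Rstar ⊆ P ∧ PotentiallyApplicable Rstar ∧
        ∀ R : Set (Rule α), R ⊆ P → PotentiallyApplicable R → R ⊆ Rstar := by
  have hsub : applicableRules P ⊆ P := Set.sep_subset _ _
  have hpa := potentiallyApplicable_applicableRules hfin
  refine ⟨applicableRules P, ⟨hsub, hpa, fun R => subset_applicableRules⟩, ?_⟩
  rintro R ⟨hRP, hR, hmax⟩
  exact (subset_applicableRules hRP hR).antisymm (hmax _ hsub hpa)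

/-- Every ground HDLP `P` has a unique maximal potentially applicable
subset `R*`: `R*` is potentially applicable and every potentially applicable
subset of `P` is contained in `R*`. -/
theorem statement6 {α : Type u} (P : Set (Rule α)) (hfin : P.Finite)
    (hhcf : HeadCycleFree P) :
    ∃! Rstar : Set (Rule α),
      Rstar ⊆ P ∧ PotentiallyApplicable Rstar ∧
        ∀ R : Set (Rule α), R ⊆ P → PotentiallyApplicable R → R ⊆ Rstar :=
  statement6_general P hfin

end ASP
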